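/- arXiv:1611.06501 — 7 statements merged into one kernel-verified Lean document; each statement's English description precedes it below -/
import Mathlib

section
/- Let δ ∈ (0,1) and M > 0, let R be a finite family of weighted open axis-parallel squares each of side length at least M, let Q ⊆ R be a subfamily, let φ : R → Q be a (δM/2)-close mapping, and let S ⊆ R be an independent subfamily. Then φ is injective on S, the δ-shrinkings of the squares of φ(S) are pairwise disjoint, and the total weight of φ(S) is at least the total weight of S. Consequently, OPT_k(Q^{−δ}) ≥ OPT_k(R) for every non-negative integer k. -/
/-!
Squares of side at least `M` that are disjoint have centers at distance at least `M`, while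
two squares sent to the same image have centers at distance at most `δM < M`; hence `φ` is
injective on an independent family. Moving each center by at most `δM/2` and replacing each
side `g` by some `g' ≤ g` with `g' ≥ M` loses at most `δM ≤ δ(g'₁ + g'₂)/2` of the separation
of two centers, which is exactly what the `δ`-shrinkings give back. Weights only go up under
`φ`, so every feasible family for `OPT_k(R)` maps to one for `OPT_k(Q^{-δ})` of no smaller
weight.
-/

open scoped Classical

/-- The open axis-parallel square with center `c` and side length `g`, as a subset of
the plane `ℝ × ℝ` equipped with the supremum norm (which is the product metric). -/
def sqSet (c : ℝ × ℝ) (g : ℝ) : Set (ℝ × ℝ) := {p | dist p c < g / 2}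

/-- The maximum total weight of a subfamily of `A` of size at most `k` whose associated
sets (`sets i` for `i` in the subfamily) are pairwise disjoint. -/
noncomputable def optFam {ι : Type*} (A : Finset ι) (sets : ι → Set (ℝ × ℝ))
    (w : ι → ℝ) (k : ℕ) : ℝ :=
  (A.powerset.filter
      (fun T => T.card ≤ k ∧ ∀ i ∈ T, ∀ j ∈ T, i ≠ j → Disjoint (sets i) (sets j))).sup'
    ⟨∅, by simp⟩ (fun T => ∑ i ∈ T, w i)

section Squares

variable {c₁ c₂ c₁' c₂' : ℝ × ℝ} {g₁ g₂ g₁' g₂' δ M : ℝ}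

theorem add_le_dist_of_disjoint_sqSet (h₁ : 0 < g₁) (h₂ : 0 < g₂)
    (h : Disjoint (sqSet c₁ g₁) (sqSet c₂ g₂)) : g₁ / 2 + g₂ / 2 ≤ dist c₁ c₂ :=
  (disjoint_ball_ball_iff (half_pos h₁) (half_pos h₂)).mp h

theorem disjoint_sqSet_of_add_le_dist (h : g₁ / 2 + g₂ / 2 ≤ dist c₁ c₂) :
    Disjoint (sqSet c₁ g₁) (sqSet c₂ g₂) :=
  Metric.ball_disjoint_ball h

theorem disjoint_sqSet_shrink_of_close (hδ : 0 ≤ δ) (hM₁ : M ≤ g₁') (hM₂ : M ≤ g₂')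
    (hg₁ : g₁' ≤ g₁) (hg₂ : g₂' ≤ g₂) (hc₁ : dist c₁ c₁' ≤ δ * M / 2)
    (hc₂ : dist c₂ c₂' ≤ δ * M / 2) (h : g₁ / 2 + g₂ / 2 ≤ dist c₁ c₂) :
    Disjoint (sqSet c₁' ((1 - δ) * g₁')) (sqSet c₂' ((1 - δ) * g₂')) := by
  apply disjoint_sqSet_of_add_le_dist
  have hδM : δ * M ≤ δ * ((g₁' + g₂') / 2) := by gcongr; linarith
  calc (1 - δ) * g₁' / 2 + (1 - δ) * g₂' / 2
      = g₁' / 2 + g₂' / 2 - δ * ((g₁' + g₂') / 2) := by ring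
    _ ≤ g₁ / 2 + g₂ / 2 - δ * M := by linarith
    _ ≤ dist c₁ c₂ - dist c₁ c₁' - dist c₂' c₂ := by rw [dist_comm c₂']; linarith
    _ ≤ dist c₁' c₂' := by linarith [dist_triangle4 c₁ c₁' c₂' c₂]

end Squares

section CloseMapping

variable {ι : Type*} {T : Finset ι} {center : ι → ℝ × ℝ} {side weight : ι → ℝ} {φ : ι → ι}
  {δ M r : ℝ}

def IsCloseMapping (r : ℝ) (T : Finset ι) (center : ι → ℝ × ℝ) (side weight : ι → ℝ)
    (φ : ι → ι) : Prop :=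
  ∀ i ∈ T, side (φ i) ≤ side i ∧ weight i ≤ weight (φ i) ∧ dist (center i) (center (φ i)) ≤ r

theorem IsCloseMapping.mono {T' : Finset ι} (h : IsCloseMapping r T center side weight φ)
    (hT : T' ⊆ T) : IsCloseMapping r T' center side weight φ :=
  fun i hi => h i (hT hi)

theorem IsCloseMapping.injOn (h : IsCloseMapping (δ * M / 2) T center side weight φ)
    (hδ : δ < 1) (hM : 0 < M) (hside : ∀ i ∈ T, M ≤ side i)
    (hind : (T : Set ι).PairwiseDisjoint fun i => sqSet (center i) (side i)) :
    Set.InjOn φ T := by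
  intro i hi j hj hφ
  by_contra hij
  have hsep := add_le_dist_of_disjoint_sqSet (hM.trans_le (hside i hi))
    (hM.trans_le (hside j hj)) (hind hi hj hij)
  have hnear : dist (center i) (center j) ≤ δ * M := by
    calc dist (center i) (center j)
        ≤ dist (center i) (center (φ i)) + dist (center j) (center (φ j)) := by
          rw [hφ]; exact dist_triangle_right _ _ _
      _ ≤ δ * M / 2 + δ * M / 2 := add_le_add (h i hi).2.2 (h j hj).2.2
      _ = δ * M := by ring
  have : δ * M < M := mul_lt_of_lt_one_left hM hδ
  linarith [hside i hi, hside j hj]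

theorem IsCloseMapping.pairwiseDisjoint_shrink
    (h : IsCloseMapping (δ * M / 2) T center side weight φ) (hδ : 0 ≤ δ) (hM : 0 < M)
    (hside : ∀ i ∈ T, M ≤ side (φ i))
    (hind : (T : Set ι).PairwiseDisjoint fun i => sqSet (center i) (side i)) :
    (T : Set ι).PairwiseDisjoint fun i => sqSet (center (φ i)) ((1 - δ) * side (φ i)) := by
  intro i hi j hj hij
  have hpos : ∀ k ∈ T, 0 < side k := fun k hk =>
    hM.trans_le ((hside k hk).trans (h k hk).1)
  exact disjoint_sqSet_shrink_of_close hδ (hside i hi) (hside j hj) (h i hi).1 (h j hj).1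
    (h i hi).2.2 (h j hj).2.2
    (add_le_dist_of_disjoint_sqSet (hpos i hi) (hpos j hj) (hind hi hj hij))

theorem IsCloseMapping.sum_le_sum_image [DecidableEq ι]
    (h : IsCloseMapping r T center side weight φ) (hinj : Set.InjOn φ T) :
    ∑ i ∈ T, weight i ≤ ∑ j ∈ T.image φ, weight j := by
  rw [Finset.sum_image hinj]
  exact Finset.sum_le_sum fun i hi => (h i hi).2.1

end CloseMapping

theorem optFam_le_optFam_of_image {ι : Type*} [DecidableEq ι] {A B : Finset ι}
    {sets sets' : ι → Set (ℝ × ℝ)} {w : ι → ℝ} {φ : ι → ι} (hφ : ∀ i ∈ A, φ i ∈ B)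
    (h : ∀ T ⊆ A, (T : Set ι).PairwiseDisjoint sets →
      (T.image φ : Set ι).PairwiseDisjoint sets' ∧ ∑ i ∈ T, w i ≤ ∑ j ∈ T.image φ, w j)
    (k : ℕ) : optFam A sets w k ≤ optFam B sets' w k := by
  refine Finset.sup'_le _ _ fun T hT => ?_
  simp only [Finset.mem_filter, Finset.mem_powerset] at hT
  obtain ⟨hTA, hTk, hTind⟩ := hT
  obtain ⟨hind', hw⟩ := h T hTA fun i hi j hj => hTind i hi j hj
  refine hw.trans (Finset.le_sup' (fun T => ∑ i ∈ T, w i) ?_)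
  simp only [Finset.mem_filter, Finset.mem_powerset]
  refine ⟨?_, Finset.card_image_le.trans hTk, fun i hi j hj => hind' hi hj⟩
  intro x hx
  obtain ⟨a, ha, rfl⟩ := Finset.mem_image.mp hx
  exact hφ a (hTA ha)

theorem close_mapping_preserves_independence_and_opt_general
    {ι : Type*} [DecidableEq ι] (δ M : ℝ) (hδ0 : 0 < δ) (hδ1 : δ < 1) (hM : 0 < M)
    (R Q : Finset ι) (hQR : Q ⊆ R)
    (center : ι → ℝ × ℝ) (side : ι → ℝ) (weight : ι → ℝ)
    (hside : ∀ i ∈ R, M ≤ side i)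
    (φ : ι → ι) (hφQ : ∀ i ∈ R, φ i ∈ Q)
    (hclose : ∀ i ∈ R, side (φ i) ≤ side i ∧ weight i ≤ weight (φ i) ∧
      dist (center i) (center (φ i)) ≤ δ * M / 2)
    (S : Finset ι) (hSR : S ⊆ R)
    (hind : ∀ i ∈ S, ∀ j ∈ S, i ≠ j →
      Disjoint (sqSet (center i) (side i)) (sqSet (center j) (side j))) :
    Set.InjOn φ ↑S ∧
    (∀ i ∈ S, ∀ j ∈ S, i ≠ j →
      Disjoint (sqSet (center (φ i)) ((1 - δ) * side (φ i)))
               (sqSet (center (φ j)) ((1 - δ) * side (φ j)))) ∧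
    (∑ i ∈ S, weight i) ≤ (∑ j ∈ S.image φ, weight j) ∧
    (∀ k : ℕ,
      optFam R (fun i => sqSet (center i) (side i)) weight k ≤
      optFam Q (fun i => sqSet (center i) ((1 - δ) * side i)) weight k) := by
  have hclose : IsCloseMapping (δ * M / 2) R center side weight φ := hclose
  have key : ∀ T ⊆ R, (T : Set ι).PairwiseDisjoint (fun i => sqSet (center i) (side i)) →
      Set.InjOn φ T ∧
      (T : Set ι).PairwiseDisjoint (fun i => sqSet (center (φ i)) ((1 - δ) * side (φ i))) ∧
      ∑ i ∈ T, weight i ≤ ∑ j ∈ T.image φ, weight j := by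
    intro T hTR hTind
    have hT := hclose.mono hTR
    have hinj := hT.injOn hδ1 hM (fun i hi => hside i (hTR hi)) hTind
    exact ⟨hinj, hT.pairwiseDisjoint_shrink hδ0.le hM
      (fun i hi => hside _ (hQR (hφQ i (hTR hi)))) hTind, hT.sum_le_sum_image hinj⟩
  obtain ⟨hinj, hdisj, hsum⟩ := key S hSR fun i hi j hj => hind i hi j hj
  refine ⟨hinj, fun i hi j hj => hdisj hi hj, hsum, optFam_le_optFam_of_image hφQ ?_⟩
  intro T hTR hTind
  obtain ⟨hinjT, hdisjT, hsumT⟩ := key T hTR hTind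
  rw [Finset.coe_image, hinjT.pairwiseDisjoint_image]
  exact ⟨hdisjT, hsumT⟩

/-- Let `R` be a family of weighted squares of side length at least `M`,
`Q ⊆ R`, `φ : R → Q` a `(δM/2)`-close mapping, and `S ⊆ R` an independent subfamily.
Then `φ` is injective on `S`, the `δ`-shrinkings of the squares of `φ(S)` are pairwise
disjoint, the weight of `φ(S)` is at least that of `S`, and consequently
`OPT_k(Q^{-δ}) ≥ OPT_k(R)` for every `k`. -/
theorem close_mapping_preserves_independence_and_opt
    {ι : Type*} [DecidableEq ι] (δ M : ℝ) (hδ0 : 0 < δ) (hδ1 : δ < 1) (hM : 0 < M)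
    (R Q : Finset ι) (hQR : Q ⊆ R)
    (center : ι → ℝ × ℝ) (side : ι → ℝ) (weight : ι → ℝ)
    (hside : ∀ i ∈ R, M ≤ side i) (hw : ∀ i ∈ R, 0 ≤ weight i)
    (φ : ι → ι) (hφQ : ∀ i ∈ R, φ i ∈ Q)
    (hclose : ∀ i ∈ R, side (φ i) ≤ side i ∧ weight i ≤ weight (φ i) ∧
      dist (center i) (center (φ i)) ≤ δ * M / 2)
    (S : Finset ι) (hSR : S ⊆ R)
    (hind : ∀ i ∈ S, ∀ j ∈ S, i ≠ j →
      Disjoint (sqSet (center i) (side i)) (sqSet (center j) (side j))) :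
    Set.InjOn φ ↑S ∧
    (∀ i ∈ S, ∀ j ∈ S, i ≠ j →
      Disjoint (sqSet (center (φ i)) ((1 - δ) * side (φ i)))
               (sqSet (center (φ j)) ((1 - δ) * side (φ j)))) ∧
    (∑ i ∈ S, weight i) ≤ (∑ j ∈ S.image φ, weight j) ∧
    (∀ k : ℕ,
      optFam R (fun i => sqSet (center i) (side i)) weight k ≤
      optFam Q (fun i => sqSet (center i) ((1 - δ) * side i)) weight k) :=
  close_mapping_preserves_independence_and_opt_general δ M hδ0 hδ1 hM R Q hQR center side weight
    hside φ hφQ hclose S hSR hind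
end

section
/- Let δ ∈ (0,1) and let R be a finite family of open axis-parallel unit squares, each carrying a non-negative real weight. Then there exists a subfamily Q ⊆ R that is (δ/2)-distant, together with a mapping φ : R → Q such that for every R_i ∈ R, the weight of φ(R_i) is at least the weight of R_i and the centers of R_i and φ(R_i) are at ℓ∞-distance at most δ/2. -/
/-!
Greedy selection: take a square of maximal weight, map to it every square whose center lies
within `δ / 2` of its center, and recurse on the remaining squares, whose centers are all
farther than `δ / 2` from the chosen one.
-/

namespace Finset

variable {ι α β : Type*} [PseudoMetricSpace α] [LinearOrder β]

theorem exists_pairwise_dist_gt_and_heavier_near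
    (s : Finset ι) (x : ι → α) (w : ι → β) {r : ℝ} (hr : 0 ≤ r) :
    ∃ t ⊆ s, (t : Set ι).Pairwise (fun i j => r < dist (x i) (x j)) ∧
      ∃ φ : ι → ι, ∀ i ∈ s, φ i ∈ t ∧ w i ≤ w (φ i) ∧ dist (x i) (x (φ i)) ≤ r := by
  classical
  induction s using Finset.strongInduction with
  | H s ih =>
  rcases s.eq_empty_or_nonempty with rfl | hs
  · exact ⟨∅, empty_subset _, by simp, id, by simp⟩
  obtain ⟨i, his, hmax⟩ := s.exists_max_image w hs
  set far := s.filter fun j => r < dist (x i) (x j)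
  have hfar : far ⊂ s := filter_ssubset.2 ⟨i, his, by simpa using hr⟩
  obtain ⟨t, hts, ht, φ, hφ⟩ := ih far hfar
  have hfar_of_mem {j : ι} (hj : j ∈ t) : r < dist (x i) (x j) := (mem_filter.1 (hts hj)).2
  refine ⟨insert i t, insert_subset his (hts.trans hfar.subset), ?_,
    fun j => if dist (x i) (x j) ≤ r then i else φ j, fun j hj => ?_⟩
  · rw [coe_insert, Set.pairwise_insert]
    exact ⟨ht, fun j hj _ => ⟨hfar_of_mem hj, dist_comm (x i) (x j) ▸ hfar_of_mem hj⟩⟩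
  · dsimp only
    split_ifs with hij
    · exact ⟨mem_insert_self _ _, hmax j hj, by rwa [dist_comm]⟩
    · obtain ⟨hφt, hφw, hφd⟩ := hφ j (mem_filter.2 ⟨hj, not_le.1 hij⟩)
      exact ⟨mem_insert_of_mem hφt, hφw, hφd⟩

end Finset

theorem exists_distant_subfamily_unit_squares_general
    {ι : Type*} (δ : ℝ) (hδ0 : 0 < δ)
    (R : Finset ι) (center : ι → ℝ × ℝ) (weight : ι → ℝ) :
    ∃ Q : Finset ι, Q ⊆ R ∧
      (∀ i ∈ Q, ∀ j ∈ Q, i ≠ j → δ / 2 ≤ dist (center i) (center j)) ∧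
      ∃ φ : ι → ι, (∀ i ∈ R, φ i ∈ Q) ∧
        ∀ i ∈ R, weight i ≤ weight (φ i) ∧ dist (center i) (center (φ i)) ≤ δ / 2 := by
  obtain ⟨Q, hQR, hQ, φ, hφ⟩ :=
    R.exists_pairwise_dist_gt_and_heavier_near center weight (half_pos hδ0).le
  exact ⟨Q, hQR, fun i hi j hj hij => (hQ hi hj hij).le, φ, fun i hi => (hφ i hi).1,
    fun i hi => (hφ i hi).2⟩

/-- For a finite family `R` of weighted open axis-parallel unit squares
(described by their centers `center i` and nonnegative weights `weight i`), there is a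
`(δ/2)`-distant subfamily `Q ⊆ R` and a mapping `φ : R → Q` such that every square of
`R` is mapped to a square of at least the same weight whose center is at `ℓ∞`-distance
at most `δ/2`. -/
theorem exists_distant_subfamily_unit_squares
    {ι : Type*} (δ : ℝ) (hδ0 : 0 < δ) (hδ1 : δ < 1)
    (R : Finset ι) (center : ι → ℝ × ℝ) (weight : ι → ℝ)
    (hw : ∀ i ∈ R, 0 ≤ weight i) :
    ∃ Q : Finset ι, Q ⊆ R ∧
      (∀ i ∈ Q, ∀ j ∈ Q, i ≠ j → δ / 2 ≤ dist (center i) (center j)) ∧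
      ∃ φ : ι → ι, (∀ i ∈ R, φ i ∈ Q) ∧
        ∀ i ∈ R, weight i ≤ weight (φ i) ∧ dist (center i) (center (φ i)) ≤ δ / 2 :=
  exists_distant_subfamily_unit_squares_general δ hδ0 R center weight
end

section
/- Let δ ∈ (0,1) and M > 0, and let R be a finite family of open axis-parallel squares of uniform weight 1, each of side length at least M. Then there exists a subfamily Q ⊆ R that is (δM/2)-distant, together with a mapping φ : R → Q such that for every R_i ∈ R, the side length of φ(R_i) is at most the side length of R_i and the centers of R_i and φ(R_i) are at ℓ∞-distance at most δM/2. -/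
/-! Greedy selection: take a square of minimal side, send every square whose center lies within
`δM/2` of its center to it, and recurse on the squares that are farther away. The chosen square
is at distance more than `δM/2` from everything selected later, and its side is at most that of
every square sent to it. -/

theorem exists_separated_subfamily_retraction {ι α β : Type*} [PseudoMetricSpace α]
    [LinearOrder β] {r : ℝ} (hr : 0 ≤ r) (center : ι → α) (side : ι → β) (R : Finset ι) :
    ∃ Q ⊆ R, (Q : Set ι).Pairwise (fun i j => r ≤ dist (center i) (center j)) ∧
      ∃ φ : ι → ι, ∀ i ∈ R, φ i ∈ Q ∧ side (φ i) ≤ side i ∧ dist (center i) (center (φ i)) ≤ r := by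
  classical
  induction R using Finset.strongInduction with
  | H R ih =>
    rcases R.eq_empty_or_nonempty with rfl | hne
    · exact ⟨∅, subset_rfl, by simp, id, by simp⟩
    obtain ⟨i₀, hi₀, hmin⟩ := R.exists_min_image side hne
    set far := R.filter fun j => r < dist (center i₀) (center j)
    have hfar : far ⊂ R :=
      Finset.filter_ssubset.mpr ⟨i₀, hi₀, by simpa using hr⟩
    obtain ⟨Q, hQ, hsep, φ, hφ⟩ := ih far hfar
    have hQfar : ∀ j ∈ Q, r < dist (center i₀) (center j) := fun j hj =>
      (Finset.mem_filter.mp (hQ hj)).2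
    refine ⟨insert i₀ Q, Finset.insert_subset hi₀ (hQ.trans hfar.subset), ?_, ?_⟩
    · rw [Finset.coe_insert]
      exact hsep.insert fun j hj _ =>
        ⟨(hQfar j hj).le, dist_comm (center i₀) (center j) ▸ (hQfar j hj).le⟩
    · refine ⟨fun i => if i ∈ far then φ i else i₀, fun i hi => ?_⟩
      by_cases hif : i ∈ far
      · obtain ⟨hφQ, hφside, hφdist⟩ := hφ i hif
        simpa [hif, hφQ] using ⟨hφside, hφdist⟩
      · have hnear : dist (center i₀) (center i) ≤ r := by simpa [far, hi] using hif
        simpa [hif, dist_comm (center i), hmin i hi] using hnear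

theorem exists_distant_subfamily_squares_general
    {ι : Type*} (δ M : ℝ) (hδ0 : 0 < δ) (hM : 0 < M)
    (R : Finset ι) (center : ι → ℝ × ℝ) (side : ι → ℝ) :
    ∃ Q : Finset ι, Q ⊆ R ∧
      (∀ i ∈ Q, ∀ j ∈ Q, i ≠ j → δ * M / 2 ≤ dist (center i) (center j)) ∧
      ∃ φ : ι → ι, (∀ i ∈ R, φ i ∈ Q) ∧
        ∀ i ∈ R, side (φ i) ≤ side i ∧ dist (center i) (center (φ i)) ≤ δ * M / 2 := by
  obtain ⟨Q, hQ, hsep, φ, hφ⟩ :=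
    exists_separated_subfamily_retraction (by positivity : 0 ≤ δ * M / 2) center side R
  exact ⟨Q, hQ, fun i hi j hj hij => hsep hi hj hij, φ, fun i hi => (hφ i hi).1,
    fun i hi => (hφ i hi).2⟩

/-- For a finite family `R` of open axis-parallel squares of uniform
weight 1 (described by centers and side lengths), each of side length at least `M`,
there is a `(δM/2)`-distant subfamily `Q ⊆ R` and a mapping `φ : R → Q` such that every
square of `R` is mapped to a square of at most the same side length whose center is at
`ℓ∞`-distance at most `δM/2`. -/
theorem exists_distant_subfamily_squares
    {ι : Type*} (δ M : ℝ) (hδ0 : 0 < δ) (hδ1 : δ < 1) (hM : 0 < M)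
    (R : Finset ι) (center : ι → ℝ × ℝ) (side : ι → ℝ)
    (hside : ∀ i ∈ R, M ≤ side i) :
    ∃ Q : Finset ι, Q ⊆ R ∧
      (∀ i ∈ Q, ∀ j ∈ Q, i ≠ j → δ * M / 2 ≤ dist (center i) (center j)) ∧
      ∃ φ : ι → ι, (∀ i ∈ R, φ i ∈ Q) ∧
        ∀ i ∈ R, side (φ i) ≤ side i ∧ dist (center i) (center (φ i)) ≤ δ * M / 2 :=
  exists_distant_subfamily_squares_general δ M hδ0 hM R center side
end

section
/- Let δ ∈ (0,1) and let R_i and R_j be two open axis-parallel squares with side lengths g_i ≤ g_j. Then at least one of the following holds: R_i is contained in R_j, or the δ-shrinkings of R_i and R_j are disjoint, or g_j/g_i < 2/δ. -/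
theorem Metric.sub_lt_add_of_not_ball_subset_of_not_disjoint {α : Type*} [PseudoMetricSpace α]
    {x y : α} {r s a b : ℝ} (hsub : ¬ball x r ⊆ ball y s)
    (hdisj : ¬Disjoint (ball x a) (ball y b)) : s - r < a + b := by
  have hfar : s < r + dist x y := not_le.mp fun h => hsub (ball_subset_ball' h)
  have hnear : dist x y < a + b := not_le.mp fun h => hdisj (ball_disjoint_ball h)
  linarith

theorem contained_or_shrink_disjoint_or_ratio_small_general
    (δ : ℝ) (hδ0 : 0 < δ)
    (ci cj : ℝ × ℝ) (gi gj : ℝ) (hgi : 0 < gi) :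
    sqSet ci gi ⊆ sqSet cj gj ∨
    Disjoint (sqSet ci ((1 - δ) * gi)) (sqSet cj ((1 - δ) * gj)) ∨
    gj / gi < 2 / δ := by
  by_cases hsub : sqSet ci gi ⊆ sqSet cj gj
  · exact Or.inl hsub
  by_cases hdisj : Disjoint (sqSet ci ((1 - δ) * gi)) (sqSet cj ((1 - δ) * gj))
  · exact Or.inr (Or.inl hdisj)
  -- `sqSet c g` unfolds to `Metric.ball c (g / 2)`.
  have hgap : gj / 2 - gi / 2 < (1 - δ) * gi / 2 + (1 - δ) * gj / 2 :=
    Metric.sub_lt_add_of_not_ball_subset_of_not_disjoint hsub hdisj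
  refine Or.inr (Or.inr ?_)
  rw [div_lt_div_iff₀ hgi hδ0]
  linarith [mul_pos hδ0 hgi]

/-- For δ ∈ (0,1) and two open axis-parallel squares with side lengths
`0 < gi ≤ gj`: either the first is contained in the second, or their δ-shrinkings are
disjoint, or `gj / gi < 2/δ`. -/
theorem contained_or_shrink_disjoint_or_ratio_small
    (δ : ℝ) (hδ0 : 0 < δ) (hδ1 : δ < 1)
    (ci cj : ℝ × ℝ) (gi gj : ℝ) (hgi : 0 < gi) (hgij : gi ≤ gj) :
    sqSet ci gi ⊆ sqSet cj gj ∨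
    Disjoint (sqSet ci ((1 - δ) * gi)) (sqSet cj ((1 - δ) * gj)) ∨
    gj / gi < 2 / δ :=
  contained_or_shrink_disjoint_or_ratio_small_general δ hδ0 ci cj gi gj hgi
end

section
/- Let δ ∈ (0,1) and let R_1, …, R_k be open axis-parallel squares with side lengths g_1 ≤ g_2 ≤ … ≤ g_k such that no square among them is contained in another, and such that g_j/g_i ≥ 2/δ for all 1 ≤ i < j ≤ k. Then the δ-shrinkings of R_1, …, R_k are pairwise disjoint. -/
namespace Metric

variable {X : Type*} [PseudoMetricSpace X]

theorem sub_lt_dist_of_not_ball_subset_ball {x y : X} {r s : ℝ} (h : ¬ ball x r ⊆ ball y s) :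
    s - r < dist x y := by
  by_contra! hle
  exact h (ball_subset_ball' (by linarith))

theorem disjoint_ball_mul_of_not_ball_subset_ball {x y : X} {r s δ : ℝ} (hδ : 0 < δ)
    (hr : 0 < r) (hrs : 2 * r ≤ δ * s) (h : ¬ ball x r ⊆ ball y s) :
    Disjoint (ball x ((1 - δ) * r)) (ball y ((1 - δ) * s)) := by
  have hdist := sub_lt_dist_of_not_ball_subset_ball h
  apply ball_disjoint_ball
  linarith [mul_pos hδ hr]

end Metric

theorem sqSet_eq_ball (c : ℝ × ℝ) (g : ℝ) : sqSet c g = Metric.ball c (g / 2) := rfl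

theorem disjoint_sqSet_shrink_of_not_subset {c c' : ℝ × ℝ} {g g' δ : ℝ} (hδ : 0 < δ)
    (hg : 0 < g) (hratio : 2 / δ ≤ g' / g) (h : ¬ sqSet c g ⊆ sqSet c' g') :
    Disjoint (sqSet c ((1 - δ) * g)) (sqSet c' ((1 - δ) * g')) := by
  have hgg' : 2 * g ≤ δ * g' := by
    rwa [div_le_div_iff₀ hδ hg, mul_comm g'] at hratio
  simp only [sqSet_eq_ball, mul_div_assoc] at h ⊢
  exact Metric.disjoint_ball_mul_of_not_ball_subset_ball hδ (half_pos hg) (by linarith) h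

theorem shrinkings_pairwise_disjoint_of_large_ratios_general
    (δ : ℝ) (hδ0 : 0 < δ) (k : ℕ)
    (c : Fin k → ℝ × ℝ) (g : Fin k → ℝ)
    (hg : ∀ i, 0 < g i)
    (hnotcont : ∀ i j : Fin k, i ≠ j → ¬ (sqSet (c i) (g i) ⊆ sqSet (c j) (g j)))
    (hratio : ∀ i j : Fin k, i < j → 2 / δ ≤ g j / g i) :
    ∀ i j : Fin k, i ≠ j →
      Disjoint (sqSet (c i) ((1 - δ) * g i)) (sqSet (c j) ((1 - δ) * g j)) := by
  intro i j hij
  rcases hij.lt_or_gt with hlt | hgt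
  · exact disjoint_sqSet_shrink_of_not_subset hδ0 (hg i) (hratio i j hlt) (hnotcont i j hij)
  · exact (disjoint_sqSet_shrink_of_not_subset hδ0 (hg j) (hratio j i hgt)
      (hnotcont j i hij.symm)).symm

/-- Given squares `R_1, …, R_k` with side lengths `g 1 ≤ … ≤ g k`, no one
contained in another, such that `g j / g i ≥ 2/δ` whenever `i < j`, the δ-shrinkings
of the squares are pairwise disjoint. -/
theorem shrinkings_pairwise_disjoint_of_large_ratios
    (δ : ℝ) (hδ0 : 0 < δ) (hδ1 : δ < 1) (k : ℕ)
    (c : Fin k → ℝ × ℝ) (g : Fin k → ℝ)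
    (hg : ∀ i, 0 < g i) (hmono : ∀ i j : Fin k, i ≤ j → g i ≤ g j)
    (hnotcont : ∀ i j : Fin k, i ≠ j → ¬ (sqSet (c i) (g i) ⊆ sqSet (c j) (g j)))
    (hratio : ∀ i j : Fin k, i < j → 2 / δ ≤ g j / g i) :
    ∀ i j : Fin k, i ≠ j →
      Disjoint (sqSet (c i) ((1 - δ) * g i)) (sqSet (c j) ((1 - δ) * g j)) :=
  shrinkings_pairwise_disjoint_of_large_ratios_general δ hδ0 k c g hg hnotcont hratio
end

section
/- Let δ ∈ (0,1) and let Q be a finite family of open axis-parallel unit squares that is (δ/2)-distant. Then for every square R_i ∈ Q, the number of squares R_j ∈ Q whose δ-shrinking either intersects the δ-shrinking of R_i, or intersects the δ-shrinking of some square of Q whose δ-shrinking intersects the δ-shrinking of R_i, is at most 64/δ². -/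
/-!
The shrunken squares have side `1 - δ`, so two of them meet only if their centers are at
distance `< 1 - δ`; hence every square counted has its center within `2 (1 - δ)` of the center
of `R_i`. Cutting the plane into a grid of half-open cells of side `δ / 2`, distinct
`(δ / 2)`-distant centers lie in distinct cells, and a sup-norm ball of radius `2 (1 - δ)` meets
at most `(8 (1 - δ) / δ + 2)² ≤ 64 / δ²` cells.
-/

open scoped Classical

open Finset Metric

theorem dist_lt_of_sqSet_inter_nonempty {c₁ c₂ : ℝ × ℝ} {g : ℝ}
    (h : (sqSet c₁ g ∩ sqSet c₂ g).Nonempty) : dist c₁ c₂ < g := by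
  simpa using dist_lt_add_of_nonempty_ball_inter_ball h

theorem card_Icc_floor_le {a b : ℝ} (h : a ≤ b) : (#(Icc ⌊a⌋ ⌊b⌋) : ℝ) ≤ b - a + 2 := by
  have hcard : (#(Icc ⌊a⌋ ⌊b⌋) : ℤ) = ⌊b⌋ + 1 - ⌊a⌋ :=
    Int.card_Icc_of_le _ _ (by linarith [Int.floor_le_floor h])
  have hcard' : (#(Icc ⌊a⌋ ⌊b⌋) : ℝ) = ⌊b⌋ + 1 - ⌊a⌋ := by exact_mod_cast hcard
  linarith [Int.floor_le b, Int.sub_one_lt_floor a]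

section Grid

variable {s : ℝ}

theorem floor_div_mem_Icc (hs : 0 < s) {x c r : ℝ} (h : dist x c ≤ r) :
    ⌊x / s⌋ ∈ Icc ⌊(c - r) / s⌋ ⌊(c + r) / s⌋ := by
  rw [Real.dist_eq, abs_le] at h
  exact mem_Icc.2 ⟨Int.floor_le_floor (by gcongr; linarith),
    Int.floor_le_floor (by gcongr; linarith)⟩

theorem dist_lt_of_floor_div_eq (hs : 0 < s) {x y : ℝ} (h : ⌊x / s⌋ = ⌊y / s⌋) :
    dist x y < s := by
  have h₁ := Int.abs_sub_lt_one_of_floor_eq_floor h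
  rw [← sub_div, abs_div, abs_of_pos hs, div_lt_one hs] at h₁
  rwa [Real.dist_eq]

noncomputable def gridCell (s : ℝ) (p : ℝ × ℝ) : ℤ × ℤ := (⌊p.1 / s⌋, ⌊p.2 / s⌋)

theorem dist_lt_of_gridCell_eq (hs : 0 < s) {p q : ℝ × ℝ} (h : gridCell s p = gridCell s q) :
    dist p q < s := by
  simp only [gridCell, Prod.mk.injEq] at h
  rw [Prod.dist_eq]
  exact max_lt (dist_lt_of_floor_div_eq hs h.1) (dist_lt_of_floor_div_eq hs h.2)

theorem card_le_of_pairwise_le_dist_of_dist_le {ι : Type*} (hs : 0 < s) {r : ℝ} (hr : 0 ≤ r)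
    (S : Finset ι) (p : ι → ℝ × ℝ) (c : ℝ × ℝ)
    (hsep : (S : Set ι).Pairwise fun i j => s ≤ dist (p i) (p j))
    (hnear : ∀ i ∈ S, dist (p i) c ≤ r) :
    (#S : ℝ) ≤ (2 * r / s + 2) ^ 2 := by
  set I₁ := Icc ⌊(c.1 - r) / s⌋ ⌊(c.1 + r) / s⌋
  set I₂ := Icc ⌊(c.2 - r) / s⌋ ⌊(c.2 + r) / s⌋
  have hmaps : ∀ i ∈ S, gridCell s (p i) ∈ I₁ ×ˢ I₂ := fun i hi =>
    mem_product.2 ⟨floor_div_mem_Icc hs ((le_max_left _ _).trans (hnear i hi)),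
      floor_div_mem_Icc hs ((le_max_right _ _).trans (hnear i hi))⟩
  have hinj : Set.InjOn (gridCell s ∘ p) S := fun i hi j hj hij => by
    by_contra hne
    exact (hsep hi hj hne).not_gt (dist_lt_of_gridCell_eq hs hij)
  have hlen : ∀ t : ℝ, (t + r) / s - (t - r) / s = 2 * r / s := fun t => by ring
  have hle : ∀ t : ℝ, (t - r) / s ≤ (t + r) / s := fun t => by gcongr; linarith
  have hI₁ : (#I₁ : ℝ) ≤ 2 * r / s + 2 := (hlen c.1).symm ▸ card_Icc_floor_le (hle c.1)
  have hI₂ : (#I₂ : ℝ) ≤ 2 * r / s + 2 := (hlen c.2).symm ▸ card_Icc_floor_le (hle c.2)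
  calc (#S : ℝ) ≤ #I₁ * #I₂ := by
        exact_mod_cast card_product I₁ I₂ ▸ card_le_card_of_injOn _ hmaps hinj
    _ ≤ (2 * r / s + 2) ^ 2 := by rw [sq]; gcongr

end Grid

theorem dist_lt_two_mul_of_two_hop {g : ℝ} {a c : ℝ × ℝ}
    (h : (sqSet a g ∩ sqSet c g).Nonempty ∨
      ∃ b, (sqSet b g ∩ sqSet c g).Nonempty ∧ (sqSet a g ∩ sqSet b g).Nonempty) :
    dist a c < 2 * g := by
  obtain h | ⟨b, hbc, hab⟩ := h
  · linarith [dist_lt_of_sqSet_inter_nonempty h, dist_nonneg (x := a) (y := c)]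
  · linarith [dist_triangle a b c, dist_lt_of_sqSet_inter_nonempty hab,
      dist_lt_of_sqSet_inter_nonempty hbc]

/-- In a `(δ/2)`-distant finite family `Q` of open axis-parallel unit
squares, for every square of `Q` the number of squares of `Q` whose δ-shrinking
intersects its δ-shrinking, or intersects the δ-shrinking of some square of `Q` whose
δ-shrinking intersects its δ-shrinking, is at most `64/δ²`. -/
theorem distant_unit_squares_shrink_two_hop_bound
    {ι : Type*} (δ : ℝ) (hδ0 : 0 < δ) (hδ1 : δ < 1)
    (Q : Finset ι) (center : ι → ℝ × ℝ)
    (hdist : ∀ i ∈ Q, ∀ j ∈ Q, i ≠ j → δ / 2 ≤ dist (center i) (center j)) :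
    ∀ i ∈ Q,
      ((Q.filter (fun j =>
          (sqSet (center j) (1 - δ) ∩ sqSet (center i) (1 - δ)).Nonempty ∨
          ∃ l ∈ Q, (sqSet (center l) (1 - δ) ∩ sqSet (center i) (1 - δ)).Nonempty ∧
            (sqSet (center j) (1 - δ) ∩ sqSet (center l) (1 - δ)).Nonempty)).card : ℝ)
        ≤ 64 / δ ^ 2 := by
  intro i _
  set S := Q.filter (fun j =>
      (sqSet (center j) (1 - δ) ∩ sqSet (center i) (1 - δ)).Nonempty ∨
      ∃ l ∈ Q, (sqSet (center l) (1 - δ) ∩ sqSet (center i) (1 - δ)).Nonempty ∧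
        (sqSet (center j) (1 - δ) ∩ sqSet (center l) (1 - δ)).Nonempty)
  have hsep : (S : Set ι).Pairwise fun j l => δ / 2 ≤ dist (center j) (center l) :=
    fun j hj l hl hne => hdist j (mem_filter.1 hj).1 l (mem_filter.1 hl).1 hne
  have hnear : ∀ j ∈ S, dist (center j) (center i) ≤ 2 * (1 - δ) := fun j hj => by
    refine (dist_lt_two_mul_of_two_hop ?_).le
    obtain h | ⟨l, -, hl⟩ := (mem_filter.1 hj).2
    exacts [.inl h, .inr ⟨_, hl⟩]
  calc (#S : ℝ) ≤ (2 * (2 * (1 - δ)) / (δ / 2) + 2) ^ 2 :=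
        card_le_of_pairwise_le_dist_of_dist_le (half_pos hδ0) (by linarith) S center (center i)
          hsep hnear
    _ = ((8 - 6 * δ) / δ) ^ 2 := by field_simp; ring
    _ ≤ 64 / δ ^ 2 := by
        rw [div_pow]
        gcongr
        nlinarith
end

section
/- Let λ > 0 and M > 0, and let R be a finite family of open axis-parallel squares, each of side length at most M, that is λ-distant. Then for every point p of the plane, the number of squares of R containing p is at most ((M+λ)/λ)². -/
/-!
A volume (packing) argument. The balls of radius `λ/2` about the centers of the squares that
contain `p` are pairwise disjoint, because the centers are `λ`-separated, and they all lie in the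
ball of radius `(M + λ)/2` about `p`. Comparing Haar measures in the plane, where the measure of a
ball scales like the square of its radius, bounds their number by `((M + λ)/λ)²`.
-/

open scoped Classical

open MeasureTheory Metric Module

theorem MeasureTheory.Measure.addHaar_real_ball_of_pos {E : Type*} [NormedAddCommGroup E]
    [NormedSpace ℝ E] [MeasurableSpace E] [BorelSpace E] [FiniteDimensional ℝ E]
    (μ : Measure E) [μ.IsAddHaarMeasure] (x : E) {r : ℝ} (hr : 0 < r) :
    μ.real (ball x r) = r ^ finrank ℝ E * μ.real (ball 0 1) := by
  rw [measureReal_def, μ.addHaar_ball_of_pos x hr, ENNReal.toReal_mul,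
    ENNReal.toReal_ofReal (by positivity), measureReal_def]

theorem card_le_of_separated_of_dist_le {E ι : Type*} [NormedAddCommGroup E] [NormedSpace ℝ E]
    [FiniteDimensional ℝ E] (s : Finset ι) (x : ι → E) (c : E) {r l : ℝ} (hr : 0 ≤ r)
    (hl : 0 < l) (hx : ∀ i ∈ s, dist (x i) c ≤ r)
    (hsep : ∀ i ∈ s, ∀ j ∈ s, i ≠ j → l ≤ dist (x i) (x j)) :
    (s.card : ℝ) ≤ ((2 * r + l) / l) ^ finrank ℝ E := by
  borelize E
  set μ : Measure E := Measure.addHaar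
  have hdisj : (s : Set ι).PairwiseDisjoint fun i => ball (x i) (l / 2) :=
    fun i hi j hj hij => ball_disjoint_ball (by linarith [hsep i hi j hj hij])
  have hsub : ⋃ i ∈ s, ball (x i) (l / 2) ⊆ ball c (r + l / 2) :=
    Set.iUnion₂_subset fun i hi => ball_subset_ball' (by linarith [hx i hi])
  have hpack : (s.card : ℝ) * ((l / 2) ^ finrank ℝ E * μ.real (ball 0 1))
      ≤ (r + l / 2) ^ finrank ℝ E * μ.real (ball 0 1) := by
    calc (s.card : ℝ) * ((l / 2) ^ finrank ℝ E * μ.real (ball 0 1))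
        = ∑ i ∈ s, μ.real (ball (x i) (l / 2)) := by
          simp [μ.addHaar_real_ball_of_pos _ (half_pos hl)]
      _ = μ.real (⋃ i ∈ s, ball (x i) (l / 2)) :=
          (measureReal_biUnion_finset hdisj fun _ _ => measurableSet_ball).symm
      _ ≤ μ.real (ball c (r + l / 2)) := measureReal_mono hsub
      _ = (r + l / 2) ^ finrank ℝ E * μ.real (ball 0 1) :=
          μ.addHaar_real_ball_of_pos _ (by positivity)
  have hunit : 0 < μ.real (ball (0 : E) 1) :=
    ENNReal.toReal_pos (measure_ball_pos μ 0 one_pos).ne' measure_ball_lt_top.ne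
  rw [← mul_assoc, mul_le_mul_iff_of_pos_right hunit, ← le_div_iff₀ (by positivity),
    ← div_pow] at hpack
  have hratio : (r + l / 2) / (l / 2) = (2 * r + l) / l := by field_simp
  rwa [hratio] at hpack

/-- A `lam`-distant finite family of open axis-parallel squares of side
length at most `M` has ply at most `((M + lam)/lam)²`: every point of the plane is
contained in at most `((M + lam)/lam)²` of the squares. -/
theorem ply_of_distant_bounded_squares
    {ι : Type*} (lam M : ℝ) (hlam : 0 < lam) (hM : 0 < M)
    (R : Finset ι) (center : ι → ℝ × ℝ) (side : ι → ℝ)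
    (hside : ∀ i ∈ R, side i ≤ M)
    (hdist : ∀ i ∈ R, ∀ j ∈ R, i ≠ j → lam ≤ dist (center i) (center j)) :
    ∀ p : ℝ × ℝ,
      ((R.filter (fun i => p ∈ sqSet (center i) (side i))).card : ℝ)
        ≤ ((M + lam) / lam) ^ 2 := by
  intro p
  have hnear : ∀ i ∈ R.filter (fun i => p ∈ sqSet (center i) (side i)),
      dist (center i) p ≤ M / 2 := by
    intro i hi
    rw [Finset.mem_filter] at hi
    linarith [dist_comm p (center i), hi.2.out, hside i hi.1]
  have hcard := card_le_of_separated_of_dist_le _ center p (by positivity) hlam hnear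
    fun i hi j hj => hdist i (Finset.mem_filter.mp hi).1 j (Finset.mem_filter.mp hj).1
  rwa [mul_div_cancel₀ M two_ne_zero, finrank_prod, finrank_self] at hcard
end
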